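/- Let u and ξ be smooth vector fields on ℝ^n with vanishing Lie bracket, i.e. (£_ξ u)^k = ξ^j ∂_j u^k − u^j ∂_j ξ^k = 0 identically. Then the deviation equation for a family of curves holds pointwise: u^n (u^j ξ^k_{|j})_{|n} = R^k_{ijl} u^i u^j ξ^l + ξ^l ( F^k_{|l} + 𝒯^k_l ), where F is the vector field F^k := u^j u^k_{|j} with covariant derivative F^k_{|l} := ∂_l F^k + Γ^k_{ml} F^m, and 𝒯^k_l := −u^n (Tu)^k_{l|n} + u^j T^k_{ji} ( u^i_{|l} − T^i_{lm} u^m ), with (Tu)^k_l := T^k_{lj} u^j regarded as a (1,1)-tensor field. -/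

import Mathlib

open scoped BigOperators

noncomputable section

/-- Partial derivative `∂_j f` of a scalar function on `ℝ^n`. -/
def pd {n : ℕ} (j : Fin n) (f : (Fin n → ℝ) → ℝ) (x : Fin n → ℝ) : ℝ :=
  fderiv ℝ f x (Pi.single j 1)

/-- Covariant derivative of a vector field: `ξ^k_{|j} = ∂_j ξ^k + Γ^k_{mj} ξ^m`. -/
def covV {n : ℕ} (Γ : Fin n → Fin n → Fin n → (Fin n → ℝ) → ℝ)
    (ξ : Fin n → (Fin n → ℝ) → ℝ) (k j : Fin n) (x : Fin n → ℝ) : ℝ :=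
  pd j (ξ k) x + ∑ m, Γ k m j x * ξ m x

/-- Covariant derivative of a (1,1)-tensor field:
`A^k_{i|j} = ∂_j A^k_i + Γ^k_{mj} A^m_i − Γ^m_{ij} A^k_m`. -/
def covT {n : ℕ} (Γ : Fin n → Fin n → Fin n → (Fin n → ℝ) → ℝ)
    (A : Fin n → Fin n → (Fin n → ℝ) → ℝ) (k i j : Fin n) (x : Fin n → ℝ) : ℝ :=
  pd j (A k i) x + ∑ m, Γ k m j x * A m i x - ∑ m, Γ m i j x * A k m x

/-- Curvature tensor
`R^k_{ijl} = ∂_j Γ^k_{il} − ∂_l Γ^k_{ij} + Γ^n_{il} Γ^k_{nj} − Γ^n_{ij} Γ^k_{nl}`. -/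
def curv {n : ℕ} (Γ : Fin n → Fin n → Fin n → (Fin n → ℝ) → ℝ)
    (k i j l : Fin n) (x : Fin n → ℝ) : ℝ :=
  pd j (Γ k i l) x - pd l (Γ k i j) x
    + ∑ m, Γ m i l x * Γ k m j x - ∑ m, Γ m i j x * Γ k m l x

/-- Torsion tensor `T^k_{ij} = Γ^k_{ji} − Γ^k_{ij}`. -/
def tor {n : ℕ} (Γ : Fin n → Fin n → Fin n → (Fin n → ℝ) → ℝ)
    (k i j : Fin n) (x : Fin n → ℝ) : ℝ :=
  Γ k j i x - Γ k i j x

/-- Lie derivative of a vector field: `(£_ξ u)^k = ξ^j ∂_j u^k − u^j ∂_j ξ^k`. -/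
def lieV {n : ℕ} (ξ u : Fin n → (Fin n → ℝ) → ℝ) (k : Fin n) (x : Fin n → ℝ) : ℝ :=
  ∑ j, ξ j x * pd j (u k) x - ∑ j, u j x * pd j (ξ k) x

/-- Lie derivative of a (1,1)-tensor field:
`(£_ξ A)^k_i = ξ^m ∂_m A^k_i − A^m_i ∂_m ξ^k + A^k_m ∂_i ξ^m`. -/
def lieT {n : ℕ} (ξ : Fin n → (Fin n → ℝ) → ℝ)
    (A : Fin n → Fin n → (Fin n → ℝ) → ℝ) (k i : Fin n) (x : Fin n → ℝ) : ℝ :=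
  ∑ m, ξ m x * pd m (A k i) x - ∑ m, A m i x * pd m (ξ k) x
    + ∑ m, A k m x * pd i (ξ m) x

/-- Lie derivative of the connection coefficients:
`£_ξ Γ^k_{ij} = ∂_j ∂_i ξ^k + ξ^m ∂_m Γ^k_{ij} − Γ^m_{ij} ∂_m ξ^k
  + Γ^k_{mj} ∂_i ξ^m + Γ^k_{im} ∂_j ξ^m`. -/
def lieC {n : ℕ} (ξ : Fin n → (Fin n → ℝ) → ℝ)
    (Γ : Fin n → Fin n → Fin n → (Fin n → ℝ) → ℝ)
    (k i j : Fin n) (x : Fin n → ℝ) : ℝ :=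
  pd j (fun y => pd i (ξ k) y) x + ∑ m, ξ m x * pd m (Γ k i j) x
    - ∑ m, Γ m i j x * pd m (ξ k) x + ∑ m, Γ k m j x * pd i (ξ m) x
    + ∑ m, Γ k i m x * pd j (ξ m) x


section deviationAux
variable {n : ℕ}

lemma pd_smooth {f : (Fin n → ℝ) → ℝ} (hf : ContDiff ℝ (⊤ : ℕ∞) f) (j : Fin n) :
    ContDiff ℝ (⊤ : ℕ∞) (pd j f) :=
  (hf.fderiv_right (by simp)).clm_apply contDiff_const

lemma pd_add {f g : (Fin n → ℝ) → ℝ} {x : Fin n → ℝ} (j : Fin n)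
    (hf : DifferentiableAt ℝ f x) (hg : DifferentiableAt ℝ g x) :
    pd j (fun y => f y + g y) x = pd j f x + pd j g x := by
  simp [pd, fderiv_fun_add hf hg]

lemma pd_sub {f g : (Fin n → ℝ) → ℝ} {x : Fin n → ℝ} (j : Fin n)
    (hf : DifferentiableAt ℝ f x) (hg : DifferentiableAt ℝ g x) :
    pd j (fun y => f y - g y) x = pd j f x - pd j g x := by
  simp [pd, fderiv_fun_sub hf hg]

lemma pd_mul {f g : (Fin n → ℝ) → ℝ} {x : Fin n → ℝ} (j : Fin n)
    (hf : DifferentiableAt ℝ f x) (hg : DifferentiableAt ℝ g x) :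
    pd j (fun y => f y * g y) x = pd j f x * g x + f x * pd j g x := by
  simp [pd, fderiv_fun_mul hf hg]; ring

lemma pd_sum {ι : Type*} {s : Finset ι} {f : ι → (Fin n → ℝ) → ℝ} {x : Fin n → ℝ}
    (j : Fin n) (hf : ∀ i ∈ s, DifferentiableAt ℝ (f i) x) :
    pd j (fun y => ∑ i ∈ s, f i y) x = ∑ i ∈ s, pd j (f i) x := by
  simp [pd, fderiv_fun_sum hf]

lemma pd_comm {f : (Fin n → ℝ) → ℝ} (hf : ContDiff ℝ (⊤ : ℕ∞) f) (i j : Fin n) (x : Fin n → ℝ) :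
    pd i (pd j f) x = pd j (pd i f) x := by
  have hd : ∀ y, HasFDerivAt f (fderiv ℝ f y) y := fun y =>
    (hf.differentiable (by simp) y).hasFDerivAt
  have hd2 : HasFDerivAt (fderiv ℝ f) (fderiv ℝ (fderiv ℝ f) x) x :=
    (((hf.fderiv_right (m := (⊤ : ℕ∞)) (by simp)).differentiable (by simp)) x).hasFDerivAt
  have hsym := second_derivative_symmetric hd hd2
  have key : ∀ v w : Fin n → ℝ,
      fderiv ℝ (fun y => fderiv ℝ f y v) x w = fderiv ℝ (fderiv ℝ f) x w v := by
    intro v w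
    have h1 : DifferentiableAt ℝ (fderiv ℝ f) x :=
      ((hf.fderiv_right (m := (⊤ : ℕ∞)) (by simp)).differentiable (by simp)) x
    have : fderiv ℝ (fun y => fderiv ℝ f y v) x = (fderiv ℝ (fderiv ℝ f) x).flip v := by
      rw [fderiv_clm_apply h1 (differentiableAt_const v)]; simp
    rw [this]; rfl
  show fderiv ℝ (fun y => fderiv ℝ f y (Pi.single j 1)) x (Pi.single i 1) = _
  rw [key, hsym, ← key]; rfl

variable (Γ : Fin n → Fin n → Fin n → (Fin n → ℝ) → ℝ) (u v ξ : Fin n → (Fin n → ℝ) → ℝ)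

lemma covV_smooth (hΓ : ∀ k i j, ContDiff ℝ (⊤ : ℕ∞) (Γ k i j)) (hv : ∀ k, ContDiff ℝ (⊤ : ℕ∞) (v k))
    (k j : Fin n) : ContDiff ℝ (⊤ : ℕ∞) (covV Γ v k j) := by
  show ContDiff ℝ (⊤ : ℕ∞) fun x => pd j (v k) x + ∑ m, Γ k m j x * v m x
  exact (pd_smooth (hv k) j).add (ContDiff.sum fun m _ => (hΓ k m j).mul (hv m))

lemma sum_mul_smooth (f g : Fin n → (Fin n → ℝ) → ℝ) (hf : ∀ j, ContDiff ℝ (⊤ : ℕ∞) (f j))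
    (hg : ∀ j, ContDiff ℝ (⊤ : ℕ∞) (g j)) : ContDiff ℝ (⊤ : ℕ∞) (fun y => ∑ j, f j y * g j y) :=
  ContDiff.sum fun j _ => (hf j).mul (hg j)

lemma tor_smooth (hΓ : ∀ k i j, ContDiff ℝ (⊤ : ℕ∞) (Γ k i j)) (k i j : Fin n) :
    ContDiff ℝ (⊤ : ℕ∞) (tor Γ k i j) := by
  show ContDiff ℝ (⊤ : ℕ∞) fun x => Γ k j i x - Γ k i j x
  exact (hΓ k j i).sub (hΓ k i j)

lemma pd_sum_mul (f g : Fin n → (Fin n → ℝ) → ℝ) (hf : ∀ j, ContDiff ℝ (⊤ : ℕ∞) (f j))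
    (hg : ∀ j, ContDiff ℝ (⊤ : ℕ∞) (g j)) (m : Fin n) (x : Fin n → ℝ) :
    pd m (fun y => ∑ j, f j y * g j y) x
      = ∑ j, (pd m (f j) x * g j x + f j x * pd m (g j) x) := by
  rw [pd_sum m (fun j _ => (((hf j).mul (hg j)).differentiable (by simp)).differentiableAt)]
  exact Finset.sum_congr rfl fun j _ => pd_mul m
    (((hf j).differentiable (by simp)).differentiableAt)
    (((hg j).differentiable (by simp)).differentiableAt)

lemma pd_covV (hΓ : ∀ k i j, ContDiff ℝ (⊤ : ℕ∞) (Γ k i j)) (hv : ∀ k, ContDiff ℝ (⊤ : ℕ∞) (v k))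
    (k j m : Fin n) (x : Fin n → ℝ) :
    pd m (covV Γ v k j) x
      = pd m (pd j (v k)) x + ∑ p, (pd m (Γ k p j) x * v p x + Γ k p j x * pd m (v p) x) := by
  have h2 : pd m (fun y => ∑ p, Γ k p j y * v p y) x
      = ∑ p, (pd m (Γ k p j) x * v p x + Γ k p j x * pd m (v p) x) :=
    pd_sum_mul (fun p => Γ k p j) v (fun p => hΓ k p j) hv m x
  have h0 : pd m (fun y => pd j (v k) y + ∑ p, Γ k p j y * v p y) x
      = pd m (pd j (v k)) x + pd m (fun y => ∑ p, Γ k p j y * v p y) x :=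
    pd_add m ((pd_smooth (hv k) j).differentiable (by simp)).differentiableAt
      (((ContDiff.sum fun p _ => (hΓ k p j).mul (hv p)).differentiable (by simp)).differentiableAt)
  show pd m (fun y => pd j (v k) y + ∑ p, Γ k p j y * v p y) x = _
  rw [h0, h2]

lemma covV_sub (f g : Fin n → (Fin n → ℝ) → ℝ) (hf : ∀ p, ContDiff ℝ (⊤ : ℕ∞) (f p))
    (hg : ∀ p, ContDiff ℝ (⊤ : ℕ∞) (g p)) (k m : Fin n) (x : Fin n → ℝ) :
    covV Γ (fun p y => f p y - g p y) k m x = covV Γ f k m x - covV Γ g k m x := by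
  show pd m (fun y => f k y - g k y) x + ∑ p, Γ k p m x * (f p x - g p x)
      = (pd m (f k) x + ∑ p, Γ k p m x * f p x) - (pd m (g k) x + ∑ p, Γ k p m x * g p x)
  rw [pd_sub m ((hf k).differentiable (by simp)).differentiableAt
      ((hg k).differentiable (by simp)).differentiableAt]
  simp only [mul_sub, Finset.sum_sub_distrib]
  ring

lemma covV_covV_expand (hΓ : ∀ k i j, ContDiff ℝ (⊤ : ℕ∞) (Γ k i j)) (hu : ∀ k, ContDiff ℝ (⊤ : ℕ∞) (u k))
    (w : Fin n → (Fin n → ℝ) → ℝ) (hw : ∀ j, ContDiff ℝ (⊤ : ℕ∞) (w j)) (k m : Fin n) (x : Fin n → ℝ) :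
    covV Γ (fun p y => ∑ j, w j y * covV Γ u p j y) k m x
      = (∑ j, (pd m (w j) x * covV Γ u k j x
          + w j x * (pd m (pd j (u k)) x
            + ∑ p, (pd m (Γ k p j) x * u p x + Γ k p j x * pd m (u p) x))))
        + ∑ p, Γ k p m x * (∑ j, w j x * covV Γ u p j x) := by
  have h1 : pd m (fun y => ∑ j, w j y * covV Γ u k j y) x
      = ∑ j, (pd m (w j) x * covV Γ u k j x + w j x * pd m (covV Γ u k j) x) :=
    pd_sum_mul w (fun j => covV Γ u k j) hw (fun j => covV_smooth Γ u hΓ hu k j) m x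
  show pd m (fun y => ∑ j, w j y * covV Γ u k j y) x
      + ∑ p, Γ k p m x * (∑ j, w j x * covV Γ u p j x) = _
  rw [h1]
  congr 1
  exact Finset.sum_congr rfl fun j _ => by rw [pd_covV Γ u hΓ hu k j m x]

lemma covV_K_expand (hΓ : ∀ k i j, ContDiff ℝ (⊤ : ℕ∞) (Γ k i j)) (hu : ∀ k, ContDiff ℝ (⊤ : ℕ∞) (u k))
    (hξ : ∀ k, ContDiff ℝ (⊤ : ℕ∞) (ξ k)) (k m : Fin n) (x : Fin n → ℝ) :
    covV Γ (fun p y => ∑ l, (∑ j, tor Γ p l j y * u j y) * ξ l y) k m x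
      = (∑ l, (pd m (fun y => ∑ j, tor Γ k l j y * u j y) x * ξ l x
          + (∑ j, tor Γ k l j x * u j x) * pd m (ξ l) x))
        + ∑ p, Γ k p m x * (∑ l, (∑ j, tor Γ p l j x * u j x) * ξ l x) := by
  have h1 : pd m (fun y => ∑ l, (∑ j, tor Γ k l j y * u j y) * ξ l y) x
      = ∑ l, (pd m (fun y => ∑ j, tor Γ k l j y * u j y) x * ξ l x
          + (∑ j, tor Γ k l j x * u j x) * pd m (ξ l) x) :=
    pd_sum_mul (fun l y => ∑ j, tor Γ k l j y * u j y) ξ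
      (fun l => sum_mul_smooth (fun j => tor Γ k l j) u (fun j => tor_smooth Γ hΓ k l j) hu) hξ m x
  show pd m (fun y => ∑ l, (∑ j, tor Γ k l j y * u j y) * ξ l y) x
      + ∑ p, Γ k p m x * (∑ l, (∑ j, tor Γ p l j x * u j x) * ξ l x) = _
  rw [h1]

-- index permutation helpers
lemma s12₃ (g : Fin n → Fin n → Fin n → ℝ) :
    ∑ a, ∑ b, ∑ c, g a b c = ∑ a, ∑ b, ∑ c, g b a c := Finset.sum_comm

lemma s23₃ (g : Fin n → Fin n → Fin n → ℝ) :
    ∑ a, ∑ b, ∑ c, g a b c = ∑ a, ∑ b, ∑ c, g a c b :=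
  Finset.sum_congr rfl fun _ _ => Finset.sum_comm

lemma s12₄ (g : Fin n → Fin n → Fin n → Fin n → ℝ) :
    ∑ a, ∑ b, ∑ c, ∑ d, g a b c d = ∑ a, ∑ b, ∑ c, ∑ d, g b a c d := Finset.sum_comm

lemma s23₄ (g : Fin n → Fin n → Fin n → Fin n → ℝ) :
    ∑ a, ∑ b, ∑ c, ∑ d, g a b c d = ∑ a, ∑ b, ∑ c, ∑ d, g a c b d :=
  Finset.sum_congr rfl fun _ _ => Finset.sum_comm

lemma s34₄ (g : Fin n → Fin n → Fin n → Fin n → ℝ) :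
    ∑ a, ∑ b, ∑ c, ∑ d, g a b c d = ∑ a, ∑ b, ∑ c, ∑ d, g a b d c :=
  Finset.sum_congr rfl fun _ _ => Finset.sum_congr rfl fun _ _ => Finset.sum_comm

lemma rot3 (g : Fin n → Fin n → Fin n → ℝ) :
    ∑ a, ∑ b, ∑ c, g a b c = ∑ a, ∑ b, ∑ c, g b c a :=
  calc ∑ a, ∑ b, ∑ c, g a b c = ∑ a, ∑ b, ∑ c, g a c b := s23₃ g
    _ = ∑ a, ∑ b, ∑ c, g b c a := s12₃ (fun a b c => g a c b)

lemma rot3p (g : Fin n → Fin n → Fin n → ℝ) :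
    ∑ a, ∑ b, ∑ c, g a b c = ∑ a, ∑ b, ∑ c, g c a b :=
  calc ∑ a, ∑ b, ∑ c, g a b c = ∑ a, ∑ b, ∑ c, g b a c := s12₃ g
    _ = ∑ a, ∑ b, ∑ c, g c a b := s23₃ (fun a b c => g b a c)

lemma rev3 (g : Fin n → Fin n → Fin n → ℝ) :
    ∑ a, ∑ b, ∑ c, g a b c = ∑ a, ∑ b, ∑ c, g c b a :=
  calc ∑ a, ∑ b, ∑ c, g a b c = ∑ a, ∑ b, ∑ c, g b a c := s12₃ g
    _ = ∑ a, ∑ b, ∑ c, g c a b := s23₃ (fun a b c => g b a c)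
    _ = ∑ a, ∑ b, ∑ c, g c b a := s12₃ (fun a b c => g c a b)

lemma perm4a (g : Fin n → Fin n → Fin n → Fin n → ℝ) :
    ∑ a, ∑ b, ∑ c, ∑ d, g a b c d = ∑ a, ∑ b, ∑ c, ∑ d, g b d c a :=
  calc ∑ a, ∑ b, ∑ c, ∑ d, g a b c d
      = ∑ a, ∑ b, ∑ c, ∑ d, g a c b d := s23₄ g
    _ = ∑ a, ∑ b, ∑ c, ∑ d, g a d b c := s34₄ (fun a b c d => g a c b d)
    _ = ∑ a, ∑ b, ∑ c, ∑ d, g a d c b := s23₄ (fun a b c d => g a d b c)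
    _ = ∑ a, ∑ b, ∑ c, ∑ d, g b d c a := s12₄ (fun a b c d => g a d c b)

lemma perm4b (g : Fin n → Fin n → Fin n → Fin n → ℝ) :
    ∑ a, ∑ b, ∑ c, ∑ d, g a b c d = ∑ a, ∑ b, ∑ c, ∑ d, g d c a b :=
  calc ∑ a, ∑ b, ∑ c, ∑ d, g a b c d
      = ∑ a, ∑ b, ∑ c, ∑ d, g b a c d := s12₄ g
    _ = ∑ a, ∑ b, ∑ c, ∑ d, g c a b d := s23₄ (fun a b c d => g b a c d)
    _ = ∑ a, ∑ b, ∑ c, ∑ d, g c b a d := s12₄ (fun a b c d => g c a b d)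
    _ = ∑ a, ∑ b, ∑ c, ∑ d, g d b a c := s34₄ (fun a b c d => g c b a d)
    _ = ∑ a, ∑ b, ∑ c, ∑ d, g d c a b := s23₄ (fun a b c d => g d b a c)

lemma perm4c (g : Fin n → Fin n → Fin n → Fin n → ℝ) :
    ∑ a, ∑ b, ∑ c, ∑ d, g a b c d = ∑ a, ∑ b, ∑ c, ∑ d, g b d a c :=
  calc ∑ a, ∑ b, ∑ c, ∑ d, g a b c d
      = ∑ a, ∑ b, ∑ c, ∑ d, g a c b d := s23₄ g
    _ = ∑ a, ∑ b, ∑ c, ∑ d, g b c a d := s12₄ (fun a b c d => g a c b d)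
    _ = ∑ a, ∑ b, ∑ c, ∑ d, g b d a c := s34₄ (fun a b c d => g b c a d)

lemma step1 (hlie : ∀ (x : Fin n → ℝ) (k : Fin n),
      (∑ j, ξ j x * pd j (u k) x) - (∑ j, u j x * pd j (ξ k) x) = 0)
    (x : Fin n → ℝ) (p : Fin n) :
    (∑ j, u j x * covV Γ ξ p j x)
      = (∑ j, ξ j x * covV Γ u p j x) - ∑ m, (∑ j, tor Γ p m j x * u j x) * ξ m x := by
  have h := sub_eq_zero.mp (hlie x p)
  simp only [covV, tor, mul_add, add_mul, sub_mul, Finset.sum_mul, Finset.mul_sum,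
    Finset.sum_add_distrib, Finset.sum_sub_distrib]
  rw [← h]
  have e1 : ∑ j, ∑ m, ξ j x * (Γ p m j x * u m x) = ∑ m, ∑ j, Γ p j m x * u j x * ξ m x :=
    Finset.sum_congr rfl fun a _ => Finset.sum_congr rfl fun b _ => by ring
  have e2 : ∑ j, ∑ m, u j x * (Γ p m j x * ξ m x) = ∑ m, ∑ j, Γ p m j x * u j x * ξ m x := by
    rw [Finset.sum_comm]
    exact Finset.sum_congr rfl fun a _ => Finset.sum_congr rfl fun b _ => by ring
  rw [e1, e2]
  ring

lemma step3_alg (A B : Fin n → ℝ) (DU DX : Fin n → Fin n → ℝ)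
    (DDU : Fin n → Fin n → Fin n → ℝ) (G : Fin n → Fin n → Fin n → ℝ)
    (DG : Fin n → Fin n → Fin n → Fin n → ℝ) (C : Fin n → Fin n → ℝ)
    (hC : ∀ p j, C p j = DU p j + ∑ m, G p m j * A m)
    (h1 : ∀ p, ∑ j, B j * DU p j = ∑ j, A j * DX p j)
    (hs : ∀ p a b, DDU p a b = DDU p b a) (k : Fin n) :
    ∑ m, A m * ((∑ j, (DX j m * C k j + B j * (DDU k j m + ∑ p, (DG k p j m * A p + G k p j * DU p m)))) + ∑ p, G k p m * (∑ j, B j * C p j))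
    = (∑ i, ∑ j, ∑ l, (DG k i l j - DG k i j l + ∑ m, G m i l * G k m j - ∑ m, G m i j * G k m l) * A i * A j * B l)
      + ∑ l, B l * ((∑ j, (DU j l * C k j + A j * (DDU k j l + ∑ p, (DG k p j l * A p + G k p j * DU p l)))) + ∑ p, G k p l * (∑ j, A j * C p j)) := by
  have h1w : ∀ W : Fin n → ℝ, (∑ a, ∑ b, A a * (DX b a * W b)) = ∑ a, ∑ b, B a * (DU b a * W b) := by
    intro W
    calc ∑ a, ∑ b, A a * (DX b a * W b) = ∑ b, ∑ a, A a * (DX b a * W b) := Finset.sum_comm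
      _ = ∑ b, (∑ a, A a * DX b a) * W b := Finset.sum_congr rfl fun b _ => by
            rw [Finset.sum_mul]; exact Finset.sum_congr rfl fun a _ => by ring
      _ = ∑ b, (∑ a, B a * DU b a) * W b := Finset.sum_congr rfl fun b _ => by rw [← h1 b]
      _ = ∑ b, ∑ a, B a * (DU b a * W b) := Finset.sum_congr rfl fun b _ => by
            rw [Finset.sum_mul]; exact Finset.sum_congr rfl fun a _ => by ring
      _ = ∑ a, ∑ b, B a * (DU b a * W b) := Finset.sum_comm
  have e1 : (∑ a, ∑ b, A a * (DX b a * DU k b)) = ∑ a, ∑ b, B a * (DU b a * DU k b) :=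
    h1w (fun b => DU k b)
  have e2 : (∑ a, ∑ b, ∑ c, A a * (DX b a * (G k c b * A c)))
      = ∑ a, ∑ b, ∑ c, B a * (DU b a * (G k c b * A c)) := by
    have l1 : (∑ a, ∑ b, ∑ c, A a * (DX b a * (G k c b * A c)))
        = ∑ a, ∑ b, A a * (DX b a * (∑ c, G k c b * A c)) :=
      Finset.sum_congr rfl fun a _ => Finset.sum_congr rfl fun b _ => by
        simp [Finset.mul_sum]
    have l2 : (∑ a, ∑ b, ∑ c, B a * (DU b a * (G k c b * A c)))
        = ∑ a, ∑ b, B a * (DU b a * (∑ c, G k c b * A c)) :=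
      Finset.sum_congr rfl fun a _ => Finset.sum_congr rfl fun b _ => by
        simp [Finset.mul_sum]
    rw [l1, l2]; exact h1w (fun b => ∑ c, G k c b * A c)
  have e3 : (∑ a, ∑ b, A a * (B b * DDU k b a)) = ∑ a, ∑ b, B a * (A b * DDU k b a) := by
    rw [Finset.sum_comm]
    exact Finset.sum_congr rfl fun a _ => Finset.sum_congr rfl fun b _ => by
      rw [hs k a b]; ring
  have e4 : (∑ a, ∑ b, ∑ c, A a * (B b * (DG k c b a * A c)))
      = ∑ a, ∑ b, ∑ c, DG k a c b * (A a * (A b * B c)) := by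
    refine (rot3 (fun a b c => A a * (B b * (DG k c b a * A c)))).trans ?_
    exact Finset.sum_congr rfl fun a _ => Finset.sum_congr rfl fun b _ =>
      Finset.sum_congr rfl fun c _ => by ring
  have e5 : (∑ a, ∑ b, ∑ c, B a * (A b * (DG k c b a * A c)))
      = ∑ a, ∑ b, ∑ c, DG k a b c * (A a * (A b * B c)) := by
    refine (rev3 (fun a b c => B a * (A b * (DG k c b a * A c)))).trans ?_
    exact Finset.sum_congr rfl fun a _ => Finset.sum_congr rfl fun b _ =>
      Finset.sum_congr rfl fun c _ => by ring
  have e6 : (∑ a, ∑ b, ∑ c, A a * (B b * (G k c b * DU c a)))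
      = ∑ a, ∑ b, ∑ c, B a * (G k b a * (A c * DU b c)) := by
    refine (rot3p (fun a b c => A a * (B b * (G k c b * DU c a)))).trans ?_
    exact Finset.sum_congr rfl fun a _ => Finset.sum_congr rfl fun b _ =>
      Finset.sum_congr rfl fun c _ => by ring
  have e7 : (∑ a, ∑ b, ∑ c, A a * (G k b a * (B c * DU b c)))
      = ∑ a, ∑ b, ∑ c, B a * (A b * (G k c b * DU c a)) := by
    refine (rot3 (fun a b c => A a * (G k b a * (B c * DU b c)))).trans ?_
    exact Finset.sum_congr rfl fun a _ => Finset.sum_congr rfl fun b _ =>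
      Finset.sum_congr rfl fun c _ => by ring
  have e8 : (∑ a, ∑ b, ∑ c, ∑ d, A a * (G k b a * (B c * (G b d c * A d))))
      = ∑ a, ∑ b, ∑ c, ∑ d, G d a c * (G k d b * (A a * (A b * B c))) := by
    refine (perm4a (fun a b c d => A a * (G k b a * (B c * (G b d c * A d))))).trans ?_
    exact Finset.sum_congr rfl fun a _ => Finset.sum_congr rfl fun b _ =>
      Finset.sum_congr rfl fun c _ => Finset.sum_congr rfl fun d _ => by ring
  have e9 : (∑ a, ∑ b, ∑ c, ∑ d, B a * (G k b a * (A c * (G b d c * A d))))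
      = ∑ a, ∑ b, ∑ c, ∑ d, G d a b * (G k d c * (A a * (A b * B c))) :=
    calc (∑ a, ∑ b, ∑ c, ∑ d, B a * (G k b a * (A c * (G b d c * A d))))
        = ∑ a, ∑ b, ∑ c, ∑ d, G b d c * (G k b a * (A d * (A c * B a))) :=
          Finset.sum_congr rfl fun a _ => Finset.sum_congr rfl fun b _ =>
            Finset.sum_congr rfl fun c _ => Finset.sum_congr rfl fun d _ => by ring
      _ = ∑ a, ∑ b, ∑ c, ∑ d, G d a b * (G k d c * (A a * (A b * B c))) :=
          (perm4b (fun a b c d => G d a b * (G k d c * (A a * (A b * B c))))).symm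
  simp only [hC, mul_add, add_mul, sub_mul, mul_sub, Finset.mul_sum, Finset.sum_mul,
    Finset.sum_add_distrib, Finset.sum_sub_distrib, mul_assoc]
  linear_combination e1 + e2 + e3 + e4 - e5 + e6 + e7 + e8 - e9

lemma step4_alg (A B : Fin n → ℝ) (DX : Fin n → Fin n → ℝ)
    (P T : Fin n → Fin n → ℝ) (G : Fin n → Fin n → Fin n → ℝ) (k : Fin n) :
    ∑ m, A m * ((∑ l, (P l m * B l + T k l * DX l m)) + ∑ p, G k p m * (∑ l, T p l * B l))
    = ∑ l, B l * (∑ m, A m * (P l m + ∑ p, G k p m * T p l - ∑ p, G p l m * T k p))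
      + ∑ l, T k l * (∑ m, A m * (DX l m + ∑ p, G l p m * B p)) := by
  have e1 : (∑ a, ∑ b, A a * (P b a * B b)) = ∑ a, ∑ b, B a * (A b * P a b) := by
    rw [Finset.sum_comm]
    exact Finset.sum_congr rfl fun a _ => Finset.sum_congr rfl fun b _ => by ring
  have e2 : (∑ a, ∑ b, A a * (T k b * DX b a)) = ∑ a, ∑ b, T k a * (A b * DX a b) := by
    rw [Finset.sum_comm]
    exact Finset.sum_congr rfl fun a _ => Finset.sum_congr rfl fun b _ => by ring
  have e3 : (∑ a, ∑ b, ∑ c, A a * (G k b a * (T b c * B c)))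
      = ∑ a, ∑ b, ∑ c, B a * (A b * (G k c b * T c a)) := by
    refine (rot3 (fun a b c => A a * (G k b a * (T b c * B c)))).trans ?_
    exact Finset.sum_congr rfl fun a _ => Finset.sum_congr rfl fun b _ =>
      Finset.sum_congr rfl fun c _ => by ring
  have e4 : (∑ a, ∑ b, ∑ c, T k a * (A b * (G a c b * B c)))
      = ∑ a, ∑ b, ∑ c, B a * (A b * (G c a b * T k c)) := by
    refine (rev3 (fun a b c => T k a * (A b * (G a c b * B c)))).trans ?_
    exact Finset.sum_congr rfl fun a _ => Finset.sum_congr rfl fun b _ =>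
      Finset.sum_congr rfl fun c _ => by ring
  simp only [mul_add, add_mul, sub_mul, mul_sub, Finset.mul_sum, Finset.sum_mul,
    Finset.sum_add_distrib, Finset.sum_sub_distrib, mul_assoc]
  linear_combination e1 + e2 + e3 - e4

lemma final_alg (A B : Fin n → ℝ) (CV : Fin n → Fin n → ℝ)
    (TO : Fin n → Fin n → Fin n → ℝ)
    (hanti : ∀ p i j, TO p i j = - TO p j i) (k : Fin n) :
    ∑ l, B l * (∑ j, ∑ i, A j * TO k j i * (CV i l - ∑ m, TO i l m * A m))
    = - ∑ l, (∑ j, TO k l j * A j) * ((∑ j, B j * CV l j) - ∑ m, (∑ j, TO l m j * A j) * B m) := by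
  have e1 : (∑ a, ∑ b, ∑ c, B a * (A b * (TO k b c * CV c a)))
      = -(∑ a, ∑ b, ∑ c, TO k a c * (A c * (B b * CV a b))) := by
    refine (rot3 (fun a b c => B a * (A b * (TO k b c * CV c a)))).trans ?_
    rw [← Finset.sum_neg_distrib]
    refine Finset.sum_congr rfl fun a _ => ?_
    rw [← Finset.sum_neg_distrib]
    refine Finset.sum_congr rfl fun b _ => ?_
    rw [← Finset.sum_neg_distrib]
    refine Finset.sum_congr rfl fun c _ => ?_
    rw [hanti k c a]; ring
  have e2 : (∑ a, ∑ b, ∑ c, ∑ d, B a * (A b * (TO k b c * (TO c a d * A d))))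
      = -(∑ a, ∑ b, ∑ c, ∑ d, TO k a d * (A d * (TO a b c * (A c * B b)))) := by
    refine (perm4c (fun a b c d => B a * (A b * (TO k b c * (TO c a d * A d))))).trans ?_
    rw [← Finset.sum_neg_distrib]
    refine Finset.sum_congr rfl fun a _ => ?_
    rw [← Finset.sum_neg_distrib]
    refine Finset.sum_congr rfl fun b _ => ?_
    rw [← Finset.sum_neg_distrib]
    refine Finset.sum_congr rfl fun c _ => ?_
    rw [← Finset.sum_neg_distrib]
    refine Finset.sum_congr rfl fun d _ => ?_
    rw [hanti k d a]; ring
  simp only [mul_sub, sub_mul, Finset.mul_sum, Finset.sum_mul, Finset.sum_sub_distrib,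
    mul_assoc, neg_sub, mul_neg, neg_neg, Finset.sum_neg_distrib]
  linear_combination e1 - e2

end deviationAux

/-- deviation equation for a family of curves. If `[ξ,u] = 0` then
`u^n (u^j ξ^k_{|j})_{|n} = R^k_{ijl} u^i u^j ξ^l + ξ^l ( F^k_{|l} + 𝒯^k_l )`,
where `F^k := u^j u^k_{|j}` and
`𝒯^k_l := −u^n (Tu)^k_{l|n} + u^j T^k_{ji} ( u^i_{|l} − T^i_{lm} u^m )`
with `(Tu)^k_l := T^k_{lj} u^j`. -/
theorem deviation_family_of_curves {n : ℕ} (hn : 0 < n)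
    (Γ : Fin n → Fin n → Fin n → (Fin n → ℝ) → ℝ)
    (u ξ : Fin n → (Fin n → ℝ) → ℝ)
    (hΓ : ∀ k i j, ContDiff ℝ (⊤ : ℕ∞) (Γ k i j))
    (hu : ∀ k, ContDiff ℝ (⊤ : ℕ∞) (u k))
    (hξ : ∀ k, ContDiff ℝ (⊤ : ℕ∞) (ξ k))
    (hlie : ∀ (x : Fin n → ℝ) (k : Fin n),
      (∑ j, ξ j x * pd j (u k) x) - (∑ j, u j x * pd j (ξ k) x) = 0) :
    ∀ (x : Fin n → ℝ) (k : Fin n),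
      (∑ m, u m x * covV Γ (fun k y => ∑ j, u j y * covV Γ ξ k j y) k m x) =
        (∑ i, ∑ j, ∑ l, curv Γ k i j l x * u i x * u j x * ξ l x)
          + (∑ l, ξ l x *
              (covV Γ (fun k y => ∑ j, u j y * covV Γ u k j y) k l x
                + (-(∑ m, u m x *
                      covT Γ (fun k l y => ∑ j, tor Γ k l j y * u j y) k l m x)
                    + ∑ j, ∑ i, u j x * tor Γ k j i x *
                        (covV Γ u i l x - ∑ m, tor Γ i l m x * u m x)))) := by
  intro x k
  have h1fun : (fun (p : Fin n) (y : Fin n → ℝ) => ∑ j, u j y * covV Γ ξ p j y)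
      = (fun p y => (∑ j, ξ j y * covV Γ u p j y)
          - ∑ m, (∑ j, tor Γ p m j y * u j y) * ξ m y) := by
    funext p y
    exact step1 Γ u ξ hlie y p
  have hHs : ∀ p, ContDiff ℝ (⊤ : ℕ∞) (fun y => ∑ j, ξ j y * covV Γ u p j y) :=
    fun p => sum_mul_smooth ξ (fun j => covV Γ u p j) hξ (fun j => covV_smooth Γ u hΓ hu p j)
  have hKs : ∀ p, ContDiff ℝ (⊤ : ℕ∞) (fun y => ∑ m, (∑ j, tor Γ p m j y * u j y) * ξ m y) :=
    fun p => sum_mul_smooth (fun m y => ∑ j, tor Γ p m j y * u j y) ξ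
      (fun m => sum_mul_smooth (fun j => tor Γ p m j) u (fun j => tor_smooth Γ hΓ p m j) hu) hξ
  have hA : (∑ m, u m x * covV Γ (fun p y => (∑ j, ξ j y * covV Γ u p j y)
          - ∑ m', (∑ j, tor Γ p m' j y * u j y) * ξ m' y) k m x)
      = (∑ m, u m x * covV Γ (fun p y => ∑ j, ξ j y * covV Γ u p j y) k m x)
        - ∑ m, u m x * covV Γ (fun p y => ∑ m', (∑ j, tor Γ p m' j y * u j y) * ξ m' y) k m x := by
    rw [← Finset.sum_sub_distrib]
    refine Finset.sum_congr rfl fun m _ => ?_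
    rw [covV_sub Γ _ _ hHs hKs k m x]; ring
  have hstep3 : (∑ m, u m x * covV Γ (fun p y => ∑ j, ξ j y * covV Γ u p j y) k m x)
      = (∑ i, ∑ j, ∑ l, curv Γ k i j l x * u i x * u j x * ξ l x)
        + ∑ l, ξ l x * covV Γ (fun p y => ∑ j, u j y * covV Γ u p j y) k l x := by
    calc (∑ m, u m x * covV Γ (fun p y => ∑ j, ξ j y * covV Γ u p j y) k m x)
        = ∑ m, u m x * ((∑ j, (pd m (ξ j) x * covV Γ u k j x
              + ξ j x * (pd m (pd j (u k)) x
                + ∑ p, (pd m (Γ k p j) x * u p x + Γ k p j x * pd m (u p) x))))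
            + ∑ p, Γ k p m x * (∑ j, ξ j x * covV Γ u p j x)) :=
          Finset.sum_congr rfl fun m _ => by
            rw [covV_covV_expand Γ u hΓ hu ξ hξ k m x]
      _ = (∑ i, ∑ j, ∑ l, curv Γ k i j l x * u i x * u j x * ξ l x)
            + ∑ l, ξ l x * ((∑ j, (pd l (u j) x * covV Γ u k j x
                + u j x * (pd l (pd j (u k)) x
                  + ∑ p, (pd l (Γ k p j) x * u p x + Γ k p j x * pd l (u p) x))))
              + ∑ p, Γ k p l x * (∑ j, u j x * covV Γ u p j x)) :=
          step3_alg (fun i => u i x) (fun i => ξ i x) (fun p m => pd m (u p) x)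
            (fun p m => pd m (ξ p) x) (fun p j m => pd m (pd j (u p)) x)
            (fun a b c => Γ a b c x) (fun a b c d => pd d (Γ a b c) x)
            (fun p j => covV Γ u p j x) (fun p j => rfl)
            (fun p => sub_eq_zero.mp (hlie x p)) (fun p a b => pd_comm (hu p) b a x) k
      _ = (∑ i, ∑ j, ∑ l, curv Γ k i j l x * u i x * u j x * ξ l x)
            + ∑ l, ξ l x * covV Γ (fun p y => ∑ j, u j y * covV Γ u p j y) k l x := by
          congr 1
          exact Finset.sum_congr rfl fun l _ => by
            rw [covV_covV_expand Γ u hΓ hu u hu k l x]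
  have hstep4 : (∑ m, u m x * covV Γ (fun p y => ∑ m', (∑ j, tor Γ p m' j y * u j y) * ξ m' y) k m x)
      = ∑ l, ξ l x * (∑ m, u m x * covT Γ (fun a b y => ∑ j, tor Γ a b j y * u j y) k l m x)
        + ∑ l, (∑ j, tor Γ k l j x * u j x) * (∑ m, u m x * covV Γ ξ l m x) := by
    calc (∑ m, u m x * covV Γ (fun p y => ∑ m', (∑ j, tor Γ p m' j y * u j y) * ξ m' y) k m x)
        = ∑ m, u m x * ((∑ l, (pd m (fun y => ∑ j, tor Γ k l j y * u j y) x * ξ l x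
              + (∑ j, tor Γ k l j x * u j x) * pd m (ξ l) x))
            + ∑ p, Γ k p m x * (∑ l, (∑ j, tor Γ p l j x * u j x) * ξ l x)) :=
          Finset.sum_congr rfl fun m _ => by
            rw [covV_K_expand Γ u ξ hΓ hu hξ k m x]
      _ = ∑ l, ξ l x * (∑ m, u m x * covT Γ (fun a b y => ∑ j, tor Γ a b j y * u j y) k l m x)
          + ∑ l, (∑ j, tor Γ k l j x * u j x) * (∑ m, u m x * covV Γ ξ l m x) :=
          step4_alg (fun i => u i x) (fun i => ξ i x) (fun l m => pd m (ξ l) x)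
            (fun l m => pd m (fun y => ∑ j, tor Γ k l j y * u j y) x)
            (fun p l => ∑ j, tor Γ p l j x * u j x) (fun a b c => Γ a b c x) k
  have hstep4' : (∑ m, u m x * covV Γ (fun p y => ∑ m', (∑ j, tor Γ p m' j y * u j y) * ξ m' y) k m x)
      = ∑ l, ξ l x * (∑ m, u m x * covT Γ (fun a b y => ∑ j, tor Γ a b j y * u j y) k l m x)
        + ∑ l, (∑ j, tor Γ k l j x * u j x) * ((∑ j, ξ j x * covV Γ u l j x)
            - ∑ m, (∑ j, tor Γ l m j x * u j x) * ξ m x) := by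
    rw [hstep4]
    congr 1
    exact Finset.sum_congr rfl fun l _ => by rw [step1 Γ u ξ hlie x l]
  have hanti : ∀ p i j, tor Γ p i j x = - tor Γ p j i x := fun p i j => by
    show Γ p j i x - Γ p i j x = -(Γ p i j x - Γ p j i x); ring
  have hfin : (∑ l, ξ l x * (∑ j, ∑ i, u j x * tor Γ k j i x
          * (covV Γ u i l x - ∑ m, tor Γ i l m x * u m x)))
      = - ∑ l, (∑ j, tor Γ k l j x * u j x) * ((∑ j, ξ j x * covV Γ u l j x)
          - ∑ m, (∑ j, tor Γ l m j x * u j x) * ξ m x) :=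
    final_alg (fun i => u i x) (fun i => ξ i x) (fun i l => covV Γ u i l x)
      (fun p i j => tor Γ p i j x) hanti k
  have hdist : (∑ l, ξ l x * (covV Γ (fun p y => ∑ j, u j y * covV Γ u p j y) k l x
        + (-(∑ m, u m x * covT Γ (fun a b y => ∑ j, tor Γ a b j y * u j y) k l m x)
          + ∑ j, ∑ i, u j x * tor Γ k j i x * (covV Γ u i l x - ∑ m, tor Γ i l m x * u m x))))
      = ((∑ l, ξ l x * covV Γ (fun p y => ∑ j, u j y * covV Γ u p j y) k l x)
          - ∑ l, ξ l x * (∑ m, u m x * covT Γ (fun a b y => ∑ j, tor Γ a b j y * u j y) k l m x))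
        + ∑ l, ξ l x * (∑ j, ∑ i, u j x * tor Γ k j i x
            * (covV Γ u i l x - ∑ m, tor Γ i l m x * u m x)) := by
    rw [← Finset.sum_sub_distrib, ← Finset.sum_add_distrib]
    exact Finset.sum_congr rfl fun l _ => by ring
  rw [h1fun, hA, hstep3, hstep4', hdist, hfin]
  ring
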